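/- arXiv:2209.14838 — 2 statements merged into one kernel-verified Lean document; each statement's English description precedes it below -/
import Mathlib

section
/- With G ≺ H, 𝒜, ℬ and A ↦ A^# as in the combinatorial set-up, an ultrafilter q ∈ S(ℬ) is a weak heir over 𝒜 if and only if r(s*q) = r(s)*r(q) for every s ∈ S(ℬ), where r : S(ℬ) → S(𝒜) is the restriction map and * is the semigroup operation on ultrafilters defined via the d-maps. -/
open Set

/-- Left translate of a set: $hA = \{h·a : a ∈ A\}$. -/
def trL {H : Type*} [Group H] (h : H) (A : Set H) : Set H := (fun x => h * x) '' A

/-- A Boolean algebra of subsets of $T ⊆ H$ closed under left translation by elements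
of $T$ (complements are taken relative to $T$). -/
def IsAlgOn {H : Type*} [Group H] (T : Set H) (𝒜 : Set (Set H)) : Prop :=
  (∀ A ∈ 𝒜, A ⊆ T) ∧ ∅ ∈ 𝒜 ∧ T ∈ 𝒜 ∧ (∀ A ∈ 𝒜, T \ A ∈ 𝒜) ∧
    (∀ A ∈ 𝒜, ∀ B ∈ 𝒜, A ∪ B ∈ 𝒜) ∧ ∀ g ∈ T, ∀ A ∈ 𝒜, trL g A ∈ 𝒜

/-- An ultrafilter on the algebra 𝒜 of subsets of $T$. -/
def IsUltraOn {H : Type*} [Group H] (T : Set H) (𝒜 p : Set (Set H)) : Prop :=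
  p ⊆ 𝒜 ∧ ∅ ∉ p ∧ T ∈ p ∧ (∀ A ∈ p, ∀ B ∈ p, A ∩ B ∈ p) ∧
    (∀ A ∈ p, ∀ B ∈ 𝒜, A ⊆ B → B ∈ p) ∧ ∀ A ∈ 𝒜, A ∈ p ∨ T \ A ∈ p

/-- The map $d_p(A) = \{g ∈ T : g⁻¹A ∈ p\}$. -/
def dmap {H : Type*} [Group H] (T : Set H) (p : Set (Set H)) (A : Set H) : Set H :=
  {g : H | g ∈ T ∧ trL g⁻¹ A ∈ p}

/-- 𝒜 is d-closed. -/
def DClosedOn {H : Type*} [Group H] (T : Set H) (𝒜 : Set (Set H)) : Prop :=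
  ∀ p : Set (Set H), IsUltraOn T 𝒜 p → ∀ A ∈ 𝒜, dmap T p A ∈ 𝒜

/-- The semigroup operation on ultrafilters: $A ∈ p*q$ iff $A ∈ 𝒜$ and $d_q(A) ∈ p$. -/
def ustar {H : Type*} [Group H] (T : Set H) (𝒜 p q : Set (Set H)) : Set (Set H) :=
  {A | A ∈ 𝒜 ∧ dmap T q A ∈ p}

/-- The combinatorial set-up: $G ≺ H$ groups, 𝒜 a d-closed $G$-algebra of subsets of
$G$, ℬ a d-closed $H$-algebra of subsets of $H$, and a Boolean monomorphism
$A ↦ A^\#$ from 𝒜 to ℬ respecting left translation by elements of $G$, with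
$A^\# ∩ G = A$ and $ℬ|_G = 𝒜$.  The field `elem` records the combinatorial content
of the elementarity $G ≺ H$: a set of 𝒜 whose $\#$-extension is nonempty is
itself nonempty. -/
structure CombSetup (H : Type*) [Group H] where
  G : Subgroup H
  𝒜 : Set (Set H)
  ℬ : Set (Set H)
  sharp : Set H → Set H
  alg𝒜 : IsAlgOn (G : Set H) 𝒜
  algℬ : IsAlgOn (univ : Set H) ℬ
  dclosed𝒜 : DClosedOn (G : Set H) 𝒜
  dclosedℬ : DClosedOn (univ : Set H) ℬ
  sharp_mem : ∀ A ∈ 𝒜, sharp A ∈ ℬ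
  sharp_inter : ∀ A ∈ 𝒜, sharp A ∩ (G : Set H) = A
  sharp_empty : sharp ∅ = ∅
  sharp_union : ∀ A ∈ 𝒜, ∀ B ∈ 𝒜, sharp (A ∪ B) = sharp A ∪ sharp B
  sharp_compl : ∀ A ∈ 𝒜, sharp ((G : Set H) \ A) = (sharp A)ᶜ
  sharp_trans : ∀ g ∈ G, ∀ A ∈ 𝒜, sharp (trL g A) = trL g (sharp A)
  restrict_mem : ∀ B ∈ ℬ, B ∩ (G : Set H) ∈ 𝒜
  elem : ∀ A ∈ 𝒜, (sharp A).Nonempty → A.Nonempty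

variable {H : Type*} [Group H]

/-- The restriction map $r : S(ℬ) → S(𝒜)$, $r(q) = \{A ∈ 𝒜 : A^\# ∈ q\}$. -/
def CombSetup.res (C : CombSetup H) (q : Set (Set H)) : Set (Set H) :=
  {A | A ∈ C.𝒜 ∧ C.sharp A ∈ q}

/-- $q ∈ S(ℬ)$ is a weak heir of $p ∈ S(𝒜)$: $d_q(A^\#) = (d_p A)^\#$ for all $A ∈ 𝒜$. -/
def CombSetup.IsWeakHeir (C : CombSetup H) (q p : Set (Set H)) : Prop :=
  IsUltraOn (univ : Set H) C.ℬ q ∧ IsUltraOn (C.G : Set H) C.𝒜 p ∧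
    ∀ A ∈ C.𝒜, dmap (univ : Set H) q (C.sharp A) = C.sharp (dmap (C.G : Set H) p A)

/-- $q ∈ S(ℬ)$ is a weak coheir of $p ∈ S(𝒜)$: for every $A ∈ 𝒜$ and $s ∈ S(ℬ)$,
$d_s(A^\#) ∈ q ↔ d_s(A^\#) ∩ G ∈ p$. -/
def CombSetup.IsWeakCoheir (C : CombSetup H) (q p : Set (Set H)) : Prop :=
  IsUltraOn (univ : Set H) C.ℬ q ∧ IsUltraOn (C.G : Set H) C.𝒜 p ∧
    ∀ A ∈ C.𝒜, ∀ s : Set (Set H), IsUltraOn (univ : Set H) C.ℬ s →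
      (dmap (univ : Set H) s (C.sharp A) ∈ q ↔
        dmap (univ : Set H) s (C.sharp A) ∩ (C.G : Set H) ∈ p)

/-- The coheir extension $p^ℬ = \{B ∈ ℬ : B ∩ G ∈ p\}$. -/
def CombSetup.coheirExt (C : CombSetup H) (p : Set (Set H)) : Set (Set H) :=
  {B | B ∈ C.ℬ ∧ B ∩ (C.G : Set H) ∈ p}

/-- $q ∈ S(ℬ)$ is a coheir over 𝒜: every set in $q$ meets $G$. -/
def CombSetup.IsCoheir (C : CombSetup H) (q : Set (Set H)) : Prop :=
  IsUltraOn (univ : Set H) C.ℬ q ∧ ∀ B ∈ q, (B ∩ (C.G : Set H)).Nonempty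

/-!
Membership of `A ∈ 𝒜` in `r(s*q)` says `d_q(A^#) ∈ s`, and in `r(s)*r(q)` it says
`(d_{r(q)} A)^# ∈ s`. So `r(s*q) = r(s)*r(q)` for all `s` says exactly that the sets `d_q(A^#)`
and `(d_{r(q)} A)^#` of ℬ lie in the same ultrafilters on ℬ, and the principal ultrafilters
separate distinct sets of ℬ.
-/

lemma sdiff_union_sdiff_eq_inter {α : Type*} {T A : Set α} (B : Set α) (hA : A ⊆ T) :
    T \ (T \ A ∪ T \ B) = A ∩ B := by
  rw [← Set.sdiff_inter, Set.sdiff_sdiff_cancel_left (inter_subset_left.trans hA)]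

lemma IsAlgOn.inter_mem {T : Set H} {𝒜 : Set (Set H)} (h𝒜 : IsAlgOn T 𝒜)
    {A B : Set H} (hA : A ∈ 𝒜) (hB : B ∈ 𝒜) : A ∩ B ∈ 𝒜 := by
  obtain ⟨hsub, -, -, hdiff, hunion, -⟩ := h𝒜
  rw [← sdiff_union_sdiff_eq_inter B (hsub A hA)]
  exact hdiff _ (hunion _ (hdiff _ hA) _ (hdiff _ hB))

lemma isUltraOn_principal {T : Set H} {𝒜 : Set (Set H)} (h𝒜 : IsAlgOn T 𝒜)
    {h : H} (hT : h ∈ T) : IsUltraOn T 𝒜 {B | B ∈ 𝒜 ∧ h ∈ B} := by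
  refine ⟨fun B hB => hB.1, fun hB => hB.2, ⟨h𝒜.2.2.1, hT⟩,
    fun A hA B hB => ⟨h𝒜.inter_mem hA.1 hB.1, hA.2, hB.2⟩,
    fun A hA B hB hAB => ⟨hB, hAB hA.2⟩, fun A hA => ?_⟩
  by_cases hA' : h ∈ A
  · exact Or.inl ⟨hA, hA'⟩
  · exact Or.inr ⟨h𝒜.2.2.2.1 _ hA, hT, hA'⟩

lemma eq_of_forall_isUltraOn_mem_iff {T : Set H} {𝒜 : Set (Set H)} (h𝒜 : IsAlgOn T 𝒜)
    {A B : Set H} (hA : A ∈ 𝒜) (hB : B ∈ 𝒜)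
    (hAB : ∀ p, IsUltraOn T 𝒜 p → (A ∈ p ↔ B ∈ p)) : A = B := by
  ext h
  by_cases hT : h ∈ T
  · simpa [hA, hB] using hAB _ (isUltraOn_principal h𝒜 hT)
  · exact iff_of_false (fun hh => hT (h𝒜.1 A hA hh)) (fun hh => hT (h𝒜.1 B hB hh))

namespace CombSetup

variable (C : CombSetup H)

lemma sharp_inter_distrib {A B : Set H} (hA : A ∈ C.𝒜) (hB : B ∈ C.𝒜) :
    C.sharp (A ∩ B) = C.sharp A ∩ C.sharp B := by
  obtain ⟨hsub, -, -, hdiff, hunion, -⟩ := C.alg𝒜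
  rw [← sdiff_union_sdiff_eq_inter B (hsub A hA),
    C.sharp_compl _ (hunion _ (hdiff _ hA) _ (hdiff _ hB)),
    C.sharp_union _ (hdiff _ hA) _ (hdiff _ hB), C.sharp_compl _ hA, C.sharp_compl _ hB,
    compl_union, compl_compl, compl_compl]

lemma sharp_mono {A B : Set H} (hA : A ∈ C.𝒜) (hB : B ∈ C.𝒜) (hAB : A ⊆ B) :
    C.sharp A ⊆ C.sharp B := by
  rw [← union_eq_self_of_subset_left hAB, C.sharp_union _ hA _ hB]
  exact subset_union_left

lemma sharp_G : C.sharp (C.G : Set H) = univ := by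
  rw [← sdiff_empty (s := (C.G : Set H)), C.sharp_compl _ C.alg𝒜.2.1, C.sharp_empty,
    compl_empty]

lemma isUltraOn_res {q : Set (Set H)} (hq : IsUltraOn univ C.ℬ q) :
    IsUltraOn (C.G : Set H) C.𝒜 (C.res q) := by
  obtain ⟨-, hq_empty, hq_univ, hq_inter, hq_mono, hq_compl⟩ := hq
  refine ⟨fun A hA => hA.1, fun h => hq_empty (C.sharp_empty ▸ h.2),
    ⟨C.alg𝒜.2.2.1, C.sharp_G ▸ hq_univ⟩,
    fun A hA B hB => ⟨C.alg𝒜.inter_mem hA.1 hB.1,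
      C.sharp_inter_distrib hA.1 hB.1 ▸ hq_inter _ hA.2 _ hB.2⟩,
    fun A hA B hB hAB =>
      ⟨hB, hq_mono _ hA.2 _ (C.sharp_mem _ hB) (C.sharp_mono hA.1 hB hAB)⟩,
    fun A hA => ?_⟩
  rcases hq_compl _ (C.sharp_mem _ hA) with h | h
  · exact Or.inl ⟨hA, h⟩
  · refine Or.inr ⟨C.alg𝒜.2.2.2.1 _ hA, ?_⟩
    rwa [C.sharp_compl _ hA, compl_eq_univ_sdiff]

lemma mem_res_ustar_iff {s q : Set (Set H)} {A : Set H} :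
    A ∈ C.res (ustar univ C.ℬ s q) ↔ A ∈ C.𝒜 ∧ dmap univ q (C.sharp A) ∈ s := by
  simp only [res, ustar, mem_ofPred_eq]
  exact ⟨fun ⟨hA, _, hd⟩ => ⟨hA, hd⟩,
    fun ⟨hA, hd⟩ => ⟨hA, C.sharp_mem _ hA, hd⟩⟩

lemma mem_ustar_res_iff {s q : Set (Set H)} (hq : IsUltraOn univ C.ℬ q) {A : Set H} :
    A ∈ ustar (C.G : Set H) C.𝒜 (C.res s) (C.res q) ↔
      A ∈ C.𝒜 ∧ C.sharp (dmap (C.G : Set H) (C.res q) A) ∈ s := by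
  simp only [res, ustar, mem_ofPred_eq]
  exact ⟨fun ⟨hA, _, hd⟩ => ⟨hA, hd⟩,
    fun ⟨hA, hd⟩ => ⟨hA, C.dclosed𝒜 _ (C.isUltraOn_res hq) _ hA, hd⟩⟩

lemma res_ustar_eq_iff {s q : Set (Set H)} (hq : IsUltraOn univ C.ℬ q) :
    C.res (ustar univ C.ℬ s q) = ustar (C.G : Set H) C.𝒜 (C.res s) (C.res q) ↔
      ∀ A ∈ C.𝒜,
        (dmap univ q (C.sharp A) ∈ s ↔ C.sharp (dmap (C.G : Set H) (C.res q) A) ∈ s) := by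
  simp only [Set.ext_iff, C.mem_res_ustar_iff, C.mem_ustar_res_iff hq]
  exact ⟨fun h A hA => by simpa [hA] using h A, fun h A => and_congr_right (h A)⟩

end CombSetup

/-- $q ∈ S(ℬ)$ is a weak heir over 𝒜 iff $r(s*q) = r(s)*r(q)$ for every $s ∈ S(ℬ)$. -/
theorem weakHeir_iff_res_mul (C : CombSetup H) (q : Set (Set H))
    (hq : IsUltraOn (univ : Set H) C.ℬ q) :
    C.IsWeakHeir q (C.res q) ↔
      ∀ s : Set (Set H), IsUltraOn (univ : Set H) C.ℬ s →
        C.res (ustar (univ : Set H) C.ℬ s q) =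
          ustar (C.G : Set H) C.𝒜 (C.res s) (C.res q) := by
  have hr : IsUltraOn (C.G : Set H) C.𝒜 (C.res q) := C.isUltraOn_res hq
  simp only [CombSetup.IsWeakHeir, C.res_ustar_eq_iff hq, hq, hr, true_and]
  constructor
  · intro heir s _ A hA
    rw [heir A hA]
  · intro hmul A hA
    exact eq_of_forall_isUltraOn_mem_iff C.algℬ (C.dclosedℬ _ hq _ (C.sharp_mem _ hA))
      (C.sharp_mem _ (C.dclosed𝒜 _ hr _ hA)) fun s hs => hmul s hs A hA
end

section
/- With G ≺ H, 𝒜, ℬ d-closed as in the combinatorial set-up, the set CH(ℬ/𝒜) of coheirs over 𝒜 is a sub-semigroup of (S(ℬ), *), and the restriction map r : CH(ℬ/𝒜) → S(𝒜) is a semigroup isomorphism with inverse p ↦ p^ℬ. -/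
open Set

variable {H : Type*} [Group H]

/-! The product `p * q` and the extension `p^ℬ` are preimages of ultrafilters under Boolean
homomorphisms (`A ↦ d_q A`, resp. `B ↦ B ∩ G`), hence ultrafilters. A coheir `q` is determined
by its trace on `G`: if `B, B' ∈ ℬ` agree on `G` and `B ∈ q ∌ B'`, then `B \ B' ∈ q` misses `G`.
Hence `B ∈ q ↔ B ∩ G ∈ r(q)`, and with `d_q(A^#) ∩ G = d_{r(q)}(A)` this makes `r`
multiplicative with inverse `p ↦ p^ℬ`. -/

structure IsBoolHomOn {α : Type*} (S T : Set α) (𝒜 ℬ : Set (Set α)) (f : Set α → Set α) :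
    Prop where
  mapsTo : ∀ A ∈ 𝒜, f A ∈ ℬ
  map_top : f S = T
  map_inter : ∀ A ∈ 𝒜, ∀ B ∈ 𝒜, f (A ∩ B) = f A ∩ f B
  map_sdiff : ∀ A ∈ 𝒜, f (S \ A) = T \ f A

theorem isBoolHomOn_inter_right {α : Type*} (T : Set α) {𝒜 ℬ : Set (Set α)}
    (h : ∀ B ∈ ℬ, B ∩ T ∈ 𝒜) : IsBoolHomOn univ T ℬ 𝒜 (· ∩ T) where
  mapsTo := h
  map_top := univ_inter T
  map_inter B _ B' _ := inter_inter_distrib_right B B' T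
  map_sdiff B _ := by ext; simp [and_comm]

theorem mem_trL {g x : H} {A : Set H} : x ∈ trL g A ↔ g⁻¹ * x ∈ A := by
  rw [trL, image_mul_left]; rfl

theorem trL_inter (g : H) (A B : Set H) : trL g (A ∩ B) = trL g A ∩ trL g B :=
  image_inter (mul_right_injective g)

theorem trL_sdiff (g : H) (A B : Set H) : trL g (A \ B) = trL g A \ trL g B :=
  image_sdiff (mul_right_injective g) A B

theorem trL_subgroup {K : Subgroup H} {g : H} (hg : g ∈ K) : trL g K = K := by
  ext x
  exact mem_trL.trans (K.mul_mem_cancel_left (inv_mem hg))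

namespace IsAlgOn

variable {T : Set H} {𝒜 : Set (Set H)} {A B : Set H}

theorem trL_mem (h : IsAlgOn T 𝒜) {g : H} (hg : g ∈ T) (hA : A ∈ 𝒜) : trL g A ∈ 𝒜 :=
  h.2.2.2.2.2 g hg A hA

theorem inter_mem_s16 (h : IsAlgOn T 𝒜) (hA : A ∈ 𝒜) (hB : B ∈ 𝒜) : A ∩ B ∈ 𝒜 := by
  have hAT := h.1 A hA
  have hBT := h.1 B hB
  have hdeMorgan : A ∩ B = T \ ((T \ A) ∪ (T \ B)) := by
    ext x
    simp only [mem_inter_iff, mem_sdiff, mem_union, not_or, not_and, not_not]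
    exact ⟨fun ⟨hxA, hxB⟩ => ⟨hAT hxA, fun _ => hxA, fun _ => hxB⟩,
      fun ⟨hxT, hxA, hxB⟩ => ⟨hxA hxT, hxB hxT⟩⟩
  rw [hdeMorgan]
  exact h.2.2.2.1 _ (h.2.2.2.2.1 _ (h.2.2.2.1 A hA) _ (h.2.2.2.1 B hB))

end IsAlgOn

namespace IsUltraOn

variable {T : Set H} {𝒜 p : Set (Set H)} {A B : Set H}

theorem sdiff_mem_iff (hp : IsUltraOn T 𝒜 p) (hA : A ∈ 𝒜) : T \ A ∈ p ↔ A ∉ p := by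
  refine ⟨fun hc ha => hp.2.1 ?_, (hp.2.2.2.2.2 A hA).resolve_left⟩
  simpa only [inter_sdiff_self] using hp.2.2.2.1 A ha _ hc

theorem inter_mem_iff (hp : IsUltraOn T 𝒜 p) (hA : A ∈ 𝒜) (hB : B ∈ 𝒜) :
    A ∩ B ∈ p ↔ A ∈ p ∧ B ∈ p :=
  ⟨fun h => ⟨hp.2.2.2.2.1 _ h A hA inter_subset_left, hp.2.2.2.2.1 _ h B hB inter_subset_right⟩,
    fun h => hp.2.2.2.1 A h.1 B h.2⟩

theorem nonempty_of_mem (hp : IsUltraOn T 𝒜 p) (hA : A ∈ p) : A.Nonempty :=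
  nonempty_iff_ne_empty.2 fun h => hp.2.1 (h ▸ hA)

theorem comap {S : Set H} {ℬ : Set (Set H)} {f : Set H → Set H} (hp : IsUltraOn T ℬ p)
    (h𝒜 : IsAlgOn S 𝒜) (hf : IsBoolHomOn S T 𝒜 ℬ f) :
    IsUltraOn S 𝒜 {A | A ∈ 𝒜 ∧ f A ∈ p} := by
  have hmono : ∀ A ∈ 𝒜, ∀ B ∈ 𝒜, A ⊆ B → f A ⊆ f B := fun A hA B hB hAB => by
    rw [← inter_eq_left.2 hAB, hf.map_inter A hA B hB]
    exact inter_subset_right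
  have hempty : f ∅ = ∅ := by
    simpa only [sdiff_self, hf.map_top] using hf.map_sdiff S h𝒜.2.2.1
  refine ⟨fun A hA => hA.1, fun h => hp.2.1 (hempty ▸ h.2),
    ⟨h𝒜.2.2.1, hf.map_top ▸ hp.2.2.1⟩, ?_, ?_, ?_⟩
  · rintro A ⟨hA, hfA⟩ B ⟨hB, hfB⟩
    exact ⟨h𝒜.inter_mem_s16 hA hB, hf.map_inter A hA B hB ▸ hp.2.2.2.1 _ hfA _ hfB⟩
  · rintro A ⟨hA, hfA⟩ B hB hAB
    exact ⟨hB, hp.2.2.2.2.1 _ hfA _ (hf.mapsTo B hB) (hmono A hA B hB hAB)⟩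
  · intro A hA
    refine (hp.2.2.2.2.2 _ (hf.mapsTo A hA)).imp (⟨hA, ·⟩) fun h => ⟨h𝒜.2.2.2.1 A hA, ?_⟩
    rwa [hf.map_sdiff A hA]

end IsUltraOn

section Product

variable {K : Subgroup H} {ℬ p q : Set (Set H)}

theorem isBoolHomOn_dmap (hℬ : IsAlgOn K ℬ) (hd : DClosedOn K ℬ) (hq : IsUltraOn K ℬ q) :
    IsBoolHomOn K K ℬ ℬ (dmap K q) where
  mapsTo := hd q hq
  map_top := by
    ext g
    exact ⟨And.left, fun hg => ⟨hg, (trL_subgroup (inv_mem hg)).symm ▸ hq.2.2.1⟩⟩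
  map_inter A hA B hB := by
    ext g
    simp only [dmap, mem_ofPred_eq, mem_inter_iff, trL_inter]
    rw [← and_and_left]
    exact and_congr_right fun hg =>
      hq.inter_mem_iff (hℬ.trL_mem (inv_mem hg) hA) (hℬ.trL_mem (inv_mem hg) hB)
  map_sdiff A hA := by
    ext g
    simp only [dmap, mem_sdiff, mem_ofPred_eq, not_and]
    refine and_congr_right fun hg => ?_
    rw [trL_sdiff, trL_subgroup (inv_mem hg), hq.sdiff_mem_iff (hℬ.trL_mem (inv_mem hg) hA),
      imp_iff_right hg]

theorem isUltraOn_ustar (hℬ : IsAlgOn K ℬ) (hd : DClosedOn K ℬ) (hp : IsUltraOn K ℬ p)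
    (hq : IsUltraOn K ℬ q) : IsUltraOn K ℬ (ustar K ℬ p q) :=
  hp.comap hℬ (isBoolHomOn_dmap hℬ hd hq)

end Product

namespace CombSetup

variable (C : CombSetup H) {p q q₁ q₂ : Set (Set H)} {A B B' : Set H}

theorem dmap_sharp_inter (q : Set (Set H)) (hA : A ∈ C.𝒜) :
    dmap univ q (C.sharp A) ∩ C.G = dmap C.G (C.res q) A := by
  ext g
  simp only [dmap, res, mem_inter_iff, mem_ofPred_eq, mem_univ, true_and]
  rw [and_comm]
  refine and_congr_right fun hg => ?_
  rw [and_iff_right (C.alg𝒜.trL_mem (inv_mem hg) hA), C.sharp_trans _ (inv_mem hg) A hA]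

variable {C}

theorem IsCoheir.mem_of_inter_eq (hq : C.IsCoheir q) (hB' : B' ∈ C.ℬ)
    (h : B ∩ C.G = B' ∩ C.G) (hB : B ∈ q) : B' ∈ q := by
  by_contra hB'q
  obtain ⟨g, ⟨hgB, hgB'⟩, hg⟩ :=
    hq.2 _ (hq.1.2.2.2.1 _ hB _ ((hq.1.sdiff_mem_iff hB').2 hB'q))
  have : g ∈ B' ∩ C.G := h ▸ ⟨hgB, hg⟩
  exact hgB'.2 this.1

theorem IsCoheir.mem_iff (hq : C.IsCoheir q) (hB : B ∈ C.ℬ) : B ∈ q ↔ B ∩ C.G ∈ C.res q := by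
  have hA := C.restrict_mem B hB
  have htrace : B ∩ C.G = C.sharp (B ∩ C.G) ∩ C.G := (C.sharp_inter _ hA).symm
  exact ⟨fun h => ⟨hA, hq.mem_of_inter_eq (C.sharp_mem _ hA) htrace h⟩,
    fun h => hq.mem_of_inter_eq hB htrace.symm h.2⟩

theorem isCoheir_ustar (hq₁ : C.IsCoheir q₁) (hq₂ : C.IsCoheir q₂) :
    C.IsCoheir (ustar univ C.ℬ q₁ q₂) := by
  refine ⟨isUltraOn_ustar (K := ⊤) C.algℬ C.dclosedℬ hq₁.1 hq₂.1, ?_⟩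
  rintro B ⟨-, hB⟩
  obtain ⟨g, ⟨-, hgB⟩, hg⟩ := hq₁.2 _ hB
  obtain ⟨g', hg'B, hg'⟩ := hq₂.2 _ hgB
  exact ⟨g * g', by simpa [mem_trL] using hg'B, mul_mem hg hg'⟩

theorem res_ustar (hq₁ : C.IsCoheir q₁) (hq₂ : IsUltraOn univ C.ℬ q₂) :
    C.res (ustar univ C.ℬ q₁ q₂) = ustar C.G C.𝒜 (C.res q₁) (C.res q₂) := by
  ext A
  refine and_congr_right fun hA => (and_iff_right (C.sharp_mem A hA)).trans ?_
  rw [hq₁.mem_iff (C.dclosedℬ q₂ hq₂ _ (C.sharp_mem A hA)), C.dmap_sharp_inter q₂ hA]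

theorem isCoheir_coheirExt (hp : IsUltraOn C.G C.𝒜 p) : C.IsCoheir (C.coheirExt p) :=
  ⟨hp.comap C.algℬ (isBoolHomOn_inter_right _ C.restrict_mem),
    fun _ hB => hp.nonempty_of_mem hB.2⟩

theorem res_coheirExt (hp : IsUltraOn C.G C.𝒜 p) : C.res (C.coheirExt p) = p := by
  ext A
  refine ⟨fun ⟨hA, _, h⟩ => C.sharp_inter A hA ▸ h, fun h => ?_⟩
  have hA := hp.1 h
  exact ⟨hA, C.sharp_mem A hA, (C.sharp_inter A hA).symm ▸ h⟩

theorem coheirExt_res (hq : C.IsCoheir q) : C.coheirExt (C.res q) = q := by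
  ext B
  exact ⟨fun ⟨hB, h⟩ => (hq.mem_iff hB).2 h, fun h => ⟨hq.1.1 h, (hq.mem_iff (hq.1.1 h)).1 h⟩⟩

end CombSetup

/-- The set $CH(ℬ/𝒜)$ of coheirs over 𝒜 is a sub-semigroup of $(S(ℬ), *)$, and the
restriction map $r$ is a semigroup isomorphism from it onto $S(𝒜)$, with inverse
$p ↦ p^ℬ$. -/
theorem coheirs_subsemigroup_res_iso (C : CombSetup H) :
    (∀ q₁ q₂ : Set (Set H), C.IsCoheir q₁ → C.IsCoheir q₂ →
        C.IsCoheir (ustar (univ : Set H) C.ℬ q₁ q₂)) ∧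
    (∀ q₁ q₂ : Set (Set H), C.IsCoheir q₁ → C.IsCoheir q₂ →
        C.res (ustar (univ : Set H) C.ℬ q₁ q₂) =
          ustar (C.G : Set H) C.𝒜 (C.res q₁) (C.res q₂)) ∧
    (∀ p : Set (Set H), IsUltraOn (C.G : Set H) C.𝒜 p →
        C.IsCoheir (C.coheirExt p) ∧ C.res (C.coheirExt p) = p) ∧
    (∀ q : Set (Set H), C.IsCoheir q → C.coheirExt (C.res q) = q) :=
  ⟨fun _ _ h₁ h₂ => C.isCoheir_ustar h₁ h₂,
    fun _ _ h₁ h₂ => C.res_ustar h₁ h₂.1,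
    fun _ hp => ⟨C.isCoheir_coheirExt hp, C.res_coheirExt hp⟩,
    fun _ hq => C.coheirExt_res hq⟩
end
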